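/- arXiv:1609.05013 — 3 statements merged into one kernel-verified Lean document; each statement's English description precedes it below -/
import Mathlib

section
/- For every permutation σ of {0,…,n} and every (n+1)-tuple x = (x₀,…,x_n) of vertices of T, one has Σ_{0≤i≤j≤n} p_{i,j}^{σ·x}(σ·x) = sgn(σ) · Σ_{0≤i≤j≤n} p_{i,j}^x(x) in A_n(T,ℤ), where σ·x = (x_{σ(0)},…,x_{σ(n)}). Consequently, the formula φ_n(x) = Σ_{0≤i≤j≤n} p_{i,j}^x(x) determines a well-defined group homomorphism φ_n : C_n(T,ℤ) → A_n(T,ℤ). -/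
/-!
Common definitions: trees are modelled as simple graphs `G` on a vertex type `V`
satisfying `G.IsTree`; `Seg G a b` is the geodesic segment `[a,b]` (the set of
vertices lying on the geodesic from `a` to `b`); `Aligned` tuples are those
contained in some geodesic segment; `AltChain V R n` is the module `C_n(T,R)` of
alternating `n`-chains; `chainOf x` is the class of a tuple; `alignedSub G R n`
is `A_n(T,R)`; `cnorm` is the ℓ¹-quotient norm.
-/

open Finsupp

variable {V : Type*}

/-- The geodesic segment `[a,b]`: the set of vertices on the geodesic from `a` to `b`. -/
def Seg (G : SimpleGraph V) (a b : V) : Set V :=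
  {v | G.dist a v + G.dist v b = G.dist a b}

/-- A tuple of vertices is aligned if its coordinates are contained in some geodesic
segment. -/
def Aligned (G : SimpleGraph V) {n : ℕ} (x : Fin n → V) : Prop :=
  ∃ a b : V, ∀ k, x k ∈ Seg G a b

/-- `proj a b` is the nearest-point projection onto the segment `[a,b]`. -/
def IsProj (G : SimpleGraph V) (proj : V → V → V → V) : Prop :=
  ∀ a b v : V, proj a b v ∈ Seg G a b ∧
    ∀ w ∈ Seg G a b, G.dist v (proj a b v) ≤ G.dist v w

/-- The submodule of relations defining alternating chains: each tuple is identified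
with `sgn σ` times its permutation by `σ`. -/
noncomputable def altRel (V : Type*) (R : Type*) [CommRing R] (n : ℕ) :
    Submodule R ((Fin (n + 1) → V) →₀ R) :=
  Submodule.span R {f | ∃ (x : Fin (n + 1) → V) (σ : Equiv.Perm (Fin (n + 1))),
    f = Finsupp.single x 1 - ((Equiv.Perm.sign σ : ℤ) : R) • Finsupp.single (x ∘ σ) 1}

/-- The module `C_n(T,R)` of alternating `n`-chains. -/
abbrev AltChain (V : Type*) (R : Type*) [CommRing R] (n : ℕ) :=
  ((Fin (n + 1) → V) →₀ R) ⧸ altRel V R n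

/-- The alternating chain determined by an `(n+1)`-tuple. -/
noncomputable def chainOf {R : Type*} [CommRing R] {n : ℕ} (x : Fin (n + 1) → V) :
    AltChain V R n :=
  Submodule.Quotient.mk (Finsupp.single x 1)

/-- The submodule `A_n(T,R)` of aligned chains, spanned by aligned tuples. -/
noncomputable def alignedSub (G : SimpleGraph V) (R : Type*) [CommRing R] (n : ℕ) :
    Submodule R (AltChain V R n) :=
  Submodule.span R {c | ∃ x : Fin (n + 1) → V, Aligned G x ∧ c = chainOf x}

/-- The map `φₙ` on tuples: `φₙ(x) = ∑_{i ≤ j} p_{i,j}^x(x)`, where `p_{i,j}^x` is the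
nearest-point projection onto `[xᵢ,xⱼ]` applied coordinatewise. -/
noncomputable def phiTuple {R : Type*} [CommRing R] {n : ℕ} (proj : V → V → V → V)
    (x : Fin (n + 1) → V) : AltChain V R n :=
  ∑ i : Fin (n + 1), ∑ j : Fin (n + 1),
    if i ≤ j then chainOf (fun k => proj (x i) (x j) (x k)) else 0

/-- The quotient norm on real alternating chains induced by the ℓ¹-norm. -/
noncomputable def cnorm {n : ℕ} (c : AltChain V ℝ n) : ℝ :=
  sInf {r : ℝ | ∃ f : (Fin (n + 1) → V) →₀ ℝ,
    (Submodule.Quotient.mk f : AltChain V ℝ n) = c ∧ r = ∑ x ∈ f.support, |f x|}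

/-!
Each summand of `φₙ(x ∘ σ)` is `sgn σ` times a summand of `φₙ(x)`, indexed by the unordered
pair `{σ i, σ j}` instead of `{i, j}`; since `σ` permutes unordered pairs, the identity follows
once `p_{a,b} = p_{b,a}`. Both are nearest points of the same segment `[a,b] = [b,a]`, and in a
tree the nearest point `p` to `v` in a subtree `S` is a gate: the geodesic from `v` to `p`
followed by the path in `S` from `p` to `q ∈ S` is a path, hence `d(v,q) = d(v,p) + d(p,q)`.
The homomorphism `φₙ` is then the descent of the linear extension of `φₙ` to free chains.
-/

theorem seg_comm (G : SimpleGraph V) (a b : V) : Seg G a b = Seg G b a := by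
  ext v
  change _ + _ = _ ↔ _ + _ = _
  rw [G.dist_comm (u := a) (v := v), G.dist_comm (u := b) (v := v), G.dist_comm (u := a) (v := b),
    add_comm]

namespace SimpleGraph

variable {G : SimpleGraph V}

theorem Walk.mem_seg_of_mem_support {s t u : V} {γ : G.Walk s t} (hγ : γ.length = G.dist s t)
    (hu : u ∈ γ.support) : u ∈ Seg G s t := by
  classical
  have hle : G.dist s u + G.dist u t ≤ γ.length := by
    rw [← γ.take_spec hu, Walk.length_append]
    exact add_le_add (G.dist_le _) (G.dist_le _)
  have htri := (γ.takeUntil u hu).reachable.dist_triangle_left t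
  exact le_antisymm (hγ ▸ hle) htri

theorem IsTree.length_eq_dist_of_isPath (hT : G.IsTree) {a b : V} {γ : G.Walk a b}
    (hγ : γ.IsPath) : γ.length = G.dist a b := by
  obtain ⟨δ, hδ, hδlen⟩ := (hT.connected a b).exists_path_of_dist
  rw [Subtype.mk.inj <| (hT.isAcyclic.subsingleton_path a b).elim ⟨γ, hγ⟩ ⟨δ, hδ⟩, hδlen]

theorem IsTree.seg_eq_support (hT : G.IsTree) {a b : V} {γ : G.Walk a b} (hγ : γ.IsPath) :
    Seg G a b = {w | w ∈ γ.support} := by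
  refine Set.Subset.antisymm (fun w hw => ?_)
    (fun w hw => Walk.mem_seg_of_mem_support (hT.length_eq_dist_of_isPath hγ) hw)
  obtain ⟨α, hα⟩ := (hT.connected a w).exists_walk_length_eq_dist
  obtain ⟨β, hβ⟩ := (hT.connected w b).exists_walk_length_eq_dist
  have hαβ : (α.append β).length = G.dist a b := by
    rw [Walk.length_append, hα, hβ]; exact hw
  rw [Set.mem_ofPred_eq, Subtype.mk.inj <| (hT.isAcyclic.subsingleton_path a b).elim ⟨γ, hγ⟩
    ⟨α.append β, (α.append β).isPath_of_length_eq_dist hαβ⟩]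
  exact Walk.support_subset_support_append_left _ _ α.end_mem_support

theorem IsTree.exists_walk_support_subset_seg (hT : G.IsTree) {a b p q : V}
    (hp : p ∈ Seg G a b) (hq : q ∈ Seg G a b) :
    ∃ δ : G.Walk p q, ∀ u ∈ δ.support, u ∈ Seg G a b := by
  classical
  obtain ⟨γ, hγ, -⟩ := (hT.connected a b).exists_path_of_dist
  rw [hT.seg_eq_support hγ] at hp hq ⊢
  refine ⟨(γ.takeUntil p hp).reverse.append (γ.takeUntil q hq), fun u hu => ?_⟩
  rw [Walk.mem_support_append_iff, Walk.support_reverse, List.mem_reverse] at hu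
  exact hu.elim (γ.support_takeUntil_subset_support hp ·) (γ.support_takeUntil_subset_support hq ·)

theorem IsTree.dist_eq_dist_add_dist_of_nearest (hT : G.IsTree) {S : Set V}
    (hS : ∀ p ∈ S, ∀ q ∈ S, ∃ δ : G.Walk p q, ∀ u ∈ δ.support, u ∈ S) {v p q : V}
    (hp : p ∈ S) (hpmin : ∀ w ∈ S, G.dist v p ≤ G.dist v w) (hq : q ∈ S) :
    G.dist v q = G.dist v p + G.dist p q := by
  classical
  obtain ⟨α, hα, hαlen⟩ := (hT.connected v p).exists_path_of_dist
  obtain ⟨δ, hδS⟩ := hS p hp q hq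
  have hαS : ∀ u ∈ α.support, u ∈ S → u = p := fun u hu huS => by
    have hsplit : G.dist v u + G.dist u p = G.dist v p := Walk.mem_seg_of_mem_support hαlen hu
    have := hpmin u huS
    exact (hT.connected u p).dist_eq_zero_iff.mp (by omega)
  have hpath : (α.append δ.bypass).IsPath := by
    have hδ := δ.bypass_isPath
    rw [Walk.isPath_def, ← δ.bypass.cons_tail_support, List.nodup_cons] at hδ
    rw [Walk.isPath_def, Walk.support_append, List.nodup_append]
    refine ⟨Walk.isPath_def _ |>.mp hα, hδ.2, fun x hx y hy hxy => hδ.1 ?_⟩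
    subst hxy
    have hxS := hδS x (δ.support_bypass_subset_support (List.mem_of_mem_tail hy))
    rwa [hαS x hx hxS] at hy
  rw [← hT.length_eq_dist_of_isPath hpath, Walk.length_append, hαlen,
    hT.length_eq_dist_of_isPath δ.bypass_isPath]

theorem IsTree.eq_of_nearest (hT : G.IsTree) {S : Set V}
    (hS : ∀ p ∈ S, ∀ q ∈ S, ∃ δ : G.Walk p q, ∀ u ∈ δ.support, u ∈ S) {v p q : V}
    (hp : p ∈ S) (hpmin : ∀ w ∈ S, G.dist v p ≤ G.dist v w)
    (hq : q ∈ S) (hqmin : ∀ w ∈ S, G.dist v q ≤ G.dist v w) : p = q := by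
  have hgate := hT.dist_eq_dist_add_dist_of_nearest hS hp hpmin hq
  have := hqmin p hp
  exact (hT.connected p q).dist_eq_zero_iff.mp (by omega)

theorem IsTree.proj_comm (hT : G.IsTree) {proj : V → V → V → V} (hproj : IsProj G proj)
    (a b v : V) : proj a b v = proj b a v := by
  obtain ⟨hab, hmin_ab⟩ := hproj a b v
  obtain ⟨hba, hmin_ba⟩ := hproj b a v
  rw [seg_comm] at hba hmin_ba
  exact hT.eq_of_nearest (fun p hp q hq => hT.exists_walk_support_subset_seg hp hq)
    hab hmin_ab hba hmin_ba

end SimpleGraph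

theorem Finset.sum_sym2_eq_sum_le {ι M : Type*} [Fintype ι] [LinearOrder ι] [AddCommMonoid M]
    (f : Sym2 ι → M) : ∑ z, f z = ∑ i, ∑ j, if i ≤ j then f s(i, j) else 0 := by
  rw [← Sym2.sortEquiv.symm.sum_comp, ← Fintype.sum_prod_type', ← Finset.sum_filter]
  exact (Finset.sum_subtype _ (by simp) (fun p : ι × ι => f s(p.1, p.2))).symm

theorem Finset.sum_le_comp_perm {ι M : Type*} [Fintype ι] [LinearOrder ι] [AddCommMonoid M]
    (σ : Equiv.Perm ι) (c : ι → ι → M) (hc : ∀ i j, c i j = c j i) :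
    ∑ i, ∑ j, (if i ≤ j then c (σ i) (σ j) else 0) = ∑ i, ∑ j, if i ≤ j then c i j else 0 := by
  calc _ = ∑ z : Sym2 ι, Sym2.lift ⟨c, hc⟩ (Sym2.map σ z) := by rw [Finset.sum_sym2_eq_sum_le]; rfl
    _ = ∑ z : Sym2 ι, Sym2.lift ⟨c, hc⟩ z :=
      (Sym2.map.injective σ.injective).bijective_of_finite.sum_comp (Sym2.lift ⟨c, hc⟩)
    _ = _ := by rw [Finset.sum_sym2_eq_sum_le]; rfl

theorem Equiv.Perm.sign_smul_sign_smul {α M : Type*} [DecidableEq α] [Fintype α] [AddCommGroup M]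
    (σ : Equiv.Perm α) (m : M) : (Equiv.Perm.sign σ : ℤ) • (Equiv.Perm.sign σ : ℤ) • m = m := by
  rw [smul_smul, ← Units.val_mul, Int.units_mul_self, Units.val_one, one_smul]

section AltChain

variable {R : Type*} [CommRing R] {n : ℕ}

theorem chainOf_comp_perm (x : Fin (n + 1) → V) (σ : Equiv.Perm (Fin (n + 1))) :
    (chainOf (x ∘ σ) : AltChain V R n) = (Equiv.Perm.sign σ : ℤ) • chainOf x := by
  have hrel : Finsupp.single x 1 - ((Equiv.Perm.sign σ : ℤ) : R) • Finsupp.single (x ∘ σ) 1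
      ∈ altRel V R n := Submodule.subset_span ⟨x, σ, rfl⟩
  rw [← Submodule.Quotient.mk_eq_zero, Submodule.Quotient.mk_sub, Submodule.Quotient.mk_smul,
    sub_eq_zero, Int.cast_smul_eq_zsmul] at hrel
  change chainOf x = _ • chainOf (x ∘ σ) at hrel
  rw [hrel, σ.sign_smul_sign_smul]

theorem altRel_le_ker_linearCombination {M : Type*} [AddCommGroup M] [Module R M]
    {F : (Fin (n + 1) → V) → M}
    (hF : ∀ (σ : Equiv.Perm (Fin (n + 1))) x, F (x ∘ σ) = (Equiv.Perm.sign σ : ℤ) • F x) :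
    altRel V R n ≤ LinearMap.ker (Finsupp.linearCombination R F) := by
  refine Submodule.span_le.mpr ?_
  rintro _ ⟨x, σ, rfl⟩
  simp [hF, Int.cast_smul_eq_zsmul, σ.sign_smul_sign_smul]

noncomputable def AltChain.lift {M : Type*} [AddCommGroup M] [Module R M]
    (F : (Fin (n + 1) → V) → M)
    (hF : ∀ (σ : Equiv.Perm (Fin (n + 1))) x, F (x ∘ σ) = (Equiv.Perm.sign σ : ℤ) • F x) :
    AltChain V R n →ₗ[R] M :=
  (altRel V R n).liftQ (Finsupp.linearCombination R F) (altRel_le_ker_linearCombination hF)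

theorem AltChain.lift_chainOf {M : Type*} [AddCommGroup M] [Module R M]
    {F : (Fin (n + 1) → V) → M}
    (hF : ∀ (σ : Equiv.Perm (Fin (n + 1))) x, F (x ∘ σ) = (Equiv.Perm.sign σ : ℤ) • F x)
    (x : Fin (n + 1) → V) : AltChain.lift (R := R) F hF (chainOf x) = F x := by
  rw [AltChain.lift, chainOf, Submodule.liftQ_apply, Finsupp.linearCombination_single, one_smul]

theorem AltChain.range_lift {M : Type*} [AddCommGroup M] [Module R M]
    {F : (Fin (n + 1) → V) → M}
    (hF : ∀ (σ : Equiv.Perm (Fin (n + 1))) x, F (x ∘ σ) = (Equiv.Perm.sign σ : ℤ) • F x) :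
    LinearMap.range (AltChain.lift (R := R) F hF) = Submodule.span R (Set.range F) := by
  rw [AltChain.lift, Submodule.range_liftQ, Finsupp.range_linearCombination]

theorem phiTuple_comp_perm {proj : V → V → V → V} (hproj : ∀ a b v, proj a b v = proj b a v)
    (σ : Equiv.Perm (Fin (n + 1))) (x : Fin (n + 1) → V) :
    phiTuple (R := R) proj (x ∘ σ) = (Equiv.Perm.sign σ : ℤ) • phiTuple (R := R) proj x := by
  have hterm : ∀ i j, (chainOf (fun k => proj (x (σ i)) (x (σ j)) (x (σ k))) : AltChain V R n) =
      (Equiv.Perm.sign σ : ℤ) • chainOf (fun k => proj (x (σ i)) (x (σ j)) (x k)) :=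
    fun i j => chainOf_comp_perm (fun k => proj (x (σ i)) (x (σ j)) (x k)) σ
  simp only [phiTuple, Function.comp_apply, hterm, Finset.smul_sum, smul_ite, smul_zero]
  exact Finset.sum_le_comp_perm σ
    (fun i j => (Equiv.Perm.sign σ : ℤ) • chainOf fun k => proj (x i) (x j) (x k))
    fun i j => by simp only [hproj (x i) (x j)]

theorem phiTuple_mem_alignedSub {G : SimpleGraph V} {proj : V → V → V → V} (hproj : IsProj G proj)
    (x : Fin (n + 1) → V) : phiTuple (R := R) proj x ∈ alignedSub G R n := by
  refine Submodule.sum_mem _ fun i _ => Submodule.sum_mem _ fun j _ => ?_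
  split_ifs
  · exact Submodule.subset_span
      ⟨_, ⟨x i, x j, fun k => (hproj (x i) (x j) (x k)).1⟩, rfl⟩
  · exact Submodule.zero_mem _

end AltChain

/-- For every permutation `σ` of `{0,…,n}` and every `(n+1)`-tuple `x`,
`∑_{i≤j} p_{i,j}^{σ·x}(σ·x) = sgn(σ) · ∑_{i≤j} p_{i,j}^x(x)` in `A_n(T,ℤ)`; consequently
`φ_n(x) = ∑_{i≤j} p_{i,j}^x(x)` determines a well-defined group homomorphism
`φ_n : C_n(T,ℤ) → A_n(T,ℤ)`. -/
theorem statement1 (G : SimpleGraph V) (hT : G.IsTree)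
    (proj : V → V → V → V) (hproj : IsProj G proj) (n : ℕ) :
    (∀ (σ : Equiv.Perm (Fin (n + 1))) (x : Fin (n + 1) → V),
      phiTuple (R := ℤ) proj (x ∘ σ) = (Equiv.Perm.sign σ : ℤ) • phiTuple (R := ℤ) proj x) ∧
    ∃ φ : AltChain V ℤ n →ₗ[ℤ] AltChain V ℤ n,
      (∀ c : AltChain V ℤ n, φ c ∈ alignedSub G ℤ n) ∧
      ∀ x : Fin (n + 1) → V, φ (chainOf x) = phiTuple proj x := by
  have hF := phiTuple_comp_perm (R := ℤ) (n := n) (hT.proj_comm hproj)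
  refine ⟨hF, AltChain.lift _ hF, fun c => ?_, AltChain.lift_chainOf hF⟩
  have hrange : LinearMap.range (AltChain.lift _ hF) ≤ alignedSub G ℤ n := by
    rw [AltChain.range_lift, Submodule.span_le]
    rintro _ ⟨x, rfl⟩
    exact phiTuple_mem_alignedSub hproj x
  exact hrange (LinearMap.mem_range_self _ c)
end

section
/- Let T be a non-empty simplicial tree and V a real Banach space. Then the augmented cochain complex 0 → V → ℓ∞_align(T,V) → ℓ∞_align(T²,V) → ℓ∞_align(T³,V) → ⋯ is exact, where the first map sends v ∈ V to the constant function with value v and the differentials are the simplicial coboundaries d. -/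
/-!
Common definitions: trees are modelled as simple graphs `G` on a vertex type `V`
satisfying `G.IsTree`; `Seg G a b` is the geodesic segment `[a,b]` (the set of
vertices lying on the geodesic from `a` to `b`); `Aligned` tuples are those
contained in some geodesic segment; `AltChain V R n` is the module `C_n(T,R)` of
alternating `n`-chains; `chainOf x` is the class of a tuple; `alignedSub G R n`
is `A_n(T,R)`; `cnorm` is the ℓ¹-quotient norm.
-/

open Finsupp

variable {V : Type*}

/-- Membership in `ℓ∞_align(T^{n+1}, W)`: bounded, alternating, and vanishing on
non-aligned tuples. -/
def IsAlFun (G : SimpleGraph V) {W : Type*} [SeminormedAddCommGroup W]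
    (n : ℕ) (f : (Fin (n + 1) → V) → W) : Prop :=
  (∃ C : ℝ, ∀ x, ‖f x‖ ≤ C) ∧
  (∀ (σ : Equiv.Perm (Fin (n + 1))) (x : Fin (n + 1) → V),
    f (x ∘ σ) = (Equiv.Perm.sign σ : ℤ) • f x) ∧
  (∀ x : Fin (n + 1) → V, ¬Aligned G x → f x = 0)

open Classical in
/-- The simplicial coboundary on `ℓ∞_align`: the alternating sum of the values on the
faces on aligned tuples, and `0` on non-aligned tuples. -/
noncomputable def cobd (G : SimpleGraph V) {W : Type*} [AddCommGroup W] (n : ℕ)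
    (f : (Fin (n + 1) → V) → W) : (Fin (n + 2) → V) → W :=
  fun x => if Aligned G x then
    ∑ j : Fin (n + 2), ((-1 : ℤ) ^ (j : ℕ)) • f (x ∘ Fin.succAbove j) else 0


/-!
Fix a base point `p` of the tree. For an aligned tuple `x`, the geodesics from `p` to the
coordinates of `x` share a cone point `q` with `(q, x)` still aligned: the gate of `p` on a
segment containing `x`. Take `q = p` when `(p, x)` is aligned; otherwise `q` is unique, hence
unchanged under permuting `x` and under passing to faces of `x` not aligned with `p`. The cone
`(C f)(x) = f(q, x)` is bounded and alternating, and for a cocycle `f` the cocycle identity at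
`(q, x)` shows that `d(C f)(x) - f(x)` only involves values of `f` on tuples aligned with `p`,
and vanishes when `(p, x)` itself is aligned. Hence `f₁ = f - d(C f)` is a cocycle vanishing on
tuples aligned with `p`, so `d(C f₁) = f₁` and `C f + C f₁` is a bounded alternating primitive
of `f`.
-/

section Segment

variable {G : SimpleGraph V}

theorem mem_seg_iff {a b v : V} : v ∈ Seg G a b ↔ G.dist a v + G.dist v b = G.dist a b :=
  Iff.rfl

theorem left_mem_seg (a b : V) : a ∈ Seg G a b := by
  simp [mem_seg_iff]

theorem right_mem_seg (a b : V) : b ∈ Seg G a b := by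
  simp [mem_seg_iff]

end Segment

namespace SimpleGraph

variable {G : SimpleGraph V}

theorem Walk.isPath_append {u v w : V} {p : G.Walk u v} {q : G.Walk v w} (hp : p.IsPath)
    (hq : q.IsPath) (h : ∀ x ∈ p.support, x ∈ q.support → x = v) : (p.append q).IsPath := by
  have hq' := hq.support_nodup
  rw [← q.cons_tail_support, List.nodup_cons] at hq'
  rw [Walk.isPath_def, Walk.support_append, List.nodup_append]
  refine ⟨hp.support_nodup, hq'.2, fun x hxp y hyq hxy => ?_⟩
  subst hxy
  obtain rfl := h x hxp (List.mem_of_mem_tail hyq)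
  exact hq'.1 hyq

namespace IsTree

variable (hT : G.IsTree)
include hT

theorem length_eq_dist {u v : V} {P : G.Walk u v} (hP : P.IsPath) : P.length = G.dist u v := by
  obtain ⟨Q, hQ, hQlen⟩ := hT.connected.exists_path_of_dist u v
  have hPQ : P = Q :=
    congrArg Subtype.val ((hT.isAcyclic.subsingleton_path u v).elim ⟨P, hP⟩ ⟨Q, hQ⟩)
  rw [hPQ, hQlen]

theorem mem_seg_iff_mem_support {a b v : V} {P : G.Walk a b} (hP : P.IsPath) :
    v ∈ Seg G a b ↔ v ∈ P.support := by
  classical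
  constructor
  · intro hv
    obtain ⟨P₁, hP₁⟩ := hT.connected.exists_walk_length_eq_dist a v
    obtain ⟨P₂, hP₂⟩ := hT.connected.exists_walk_length_eq_dist v b
    have hlen : (P₁.append P₂).length = G.dist a b := by rw [Walk.length_append, hP₁, hP₂, hv]
    have hpath := (P₁.append P₂).isPath_of_length_eq_dist hlen
    have hP₁₂ : P₁.append P₂ = P :=
      congrArg Subtype.val ((hT.isAcyclic.subsingleton_path a b).elim ⟨_, hpath⟩ ⟨P, hP⟩)
    rw [← hP₁₂]
    exact Walk.mem_support_append_iff _ _ |>.2 (Or.inl P₁.end_mem_support)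
  · intro hv
    have h₁ := hT.length_eq_dist (hP.takeUntil hv)
    have h₂ := hT.length_eq_dist (hP.dropUntil hv)
    have h := congrArg Walk.length (P.take_spec hv)
    rw [Walk.length_append, hT.length_eq_dist hP] at h
    rw [mem_seg_iff]
    omega

theorem mem_seg_of_seg_inter_seg_subset {u v w : V} (H : Seg G u v ∩ Seg G v w ⊆ {v}) :
    v ∈ Seg G u w := by
  obtain ⟨P₁, hP₁, hlen₁⟩ := hT.connected.exists_path_of_dist u v
  obtain ⟨P₂, hP₂, hlen₂⟩ := hT.connected.exists_path_of_dist v w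
  have hpath : (P₁.append P₂).IsPath := Walk.isPath_append hP₁ hP₂ fun x h₁ h₂ =>
    H ⟨(hT.mem_seg_iff_mem_support hP₁).2 h₁, (hT.mem_seg_iff_mem_support hP₂).2 h₂⟩
  have hlen := hT.length_eq_dist hpath
  rw [Walk.length_append, hlen₁, hlen₂] at hlen
  exact hlen

theorem mem_seg_total {a b v w : V} (hv : v ∈ Seg G a b) (hw : w ∈ Seg G a b) :
    v ∈ Seg G a w ∨ w ∈ Seg G a v := by
  classical
  obtain ⟨P, hP, -⟩ := hT.connected.exists_path_of_dist a b
  have hvP := (hT.mem_seg_iff_mem_support hP).1 hv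
  have hwP : w ∈ (P.takeUntil v hvP).support ∨ w ∈ (P.dropUntil v hvP).support := by
    rw [← Walk.mem_support_append_iff, P.take_spec hvP]
    exact (hT.mem_seg_iff_mem_support hP).1 hw
  rcases hwP with hw' | hw'
  · exact Or.inr ((hT.mem_seg_iff_mem_support (hP.takeUntil hvP)).2 hw')
  · have hvwb := (hT.mem_seg_iff_mem_support (hP.dropUntil hvP)).2 hw'
    have : G.dist a w ≤ G.dist a v + G.dist v w := hT.connected.dist_triangle
    have : G.dist a b ≤ G.dist a w + G.dist w b := hT.connected.dist_triangle
    simp only [mem_seg_iff] at *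
    omega

theorem mem_seg_of_mem_seg_of_mem_seg {a b v w x : V} (hv : v ∈ Seg G a b)
    (hw : w ∈ Seg G a b) (hx : x ∈ Seg G v w) : x ∈ Seg G a b := by
  have : G.dist a x ≤ G.dist a v + G.dist v x := hT.connected.dist_triangle
  have : G.dist a x ≤ G.dist a w + G.dist w x := hT.connected.dist_triangle
  have : G.dist x b ≤ G.dist x v + G.dist v b := hT.connected.dist_triangle
  have : G.dist x b ≤ G.dist x w + G.dist w b := hT.connected.dist_triangle
  have : G.dist a b ≤ G.dist a x + G.dist x b := hT.connected.dist_triangle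
  have : G.dist w v = G.dist v w := G.dist_comm
  have : G.dist w x = G.dist x w := G.dist_comm
  have : G.dist x v = G.dist v x := G.dist_comm
  rcases hT.mem_seg_total hv hw with h | h <;> simp only [mem_seg_iff] at * <;> omega

theorem mem_seg_or_mem_seg_or_mem_seg {a b u v w : V} (hu : u ∈ Seg G a b)
    (hv : v ∈ Seg G a b) (hw : w ∈ Seg G a b) :
    u ∈ Seg G v w ∨ v ∈ Seg G u w ∨ w ∈ Seg G u v := by
  have : G.dist v u = G.dist u v := G.dist_comm
  have : G.dist w u = G.dist u w := G.dist_comm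
  have : G.dist w v = G.dist v w := G.dist_comm
  rcases hT.mem_seg_total hu hv with h₁ | h₁ <;> rcases hT.mem_seg_total hv hw with h₂ | h₂ <;>
    rcases hT.mem_seg_total hu hw with h₃ | h₃ <;> simp only [mem_seg_iff] at * <;> omega

theorem exists_gate (p a b : V) :
    ∃ m ∈ Seg G a b, ∀ v ∈ Seg G a b, m ∈ Seg G p v := by
  classical
  obtain ⟨P, hP, -⟩ := hT.connected.exists_path_of_dist a b
  -- the gate is the vertex of `[a, b]` nearest to `p`
  obtain ⟨m, hmP, hmin⟩ := P.support.toFinset.exists_min_image (G.dist p)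
    ⟨a, List.mem_toFinset.2 P.start_mem_support⟩
  have hm : m ∈ Seg G a b := (hT.mem_seg_iff_mem_support hP).2 (List.mem_toFinset.1 hmP)
  refine ⟨m, hm, fun v hv => hT.mem_seg_of_seg_inter_seg_subset fun x ⟨hpx, hxv⟩ => ?_⟩
  have hx : x ∈ Seg G a b := hT.mem_seg_of_mem_seg_of_mem_seg hm hv hxv
  have := hmin x (List.mem_toFinset.2 ((hT.mem_seg_iff_mem_support hP).1 hx))
  rw [mem_seg_iff] at hpx
  exact hT.connected.dist_eq_zero_iff.1 (by omega)

end IsTree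

end SimpleGraph

section Aligned

variable {G : SimpleGraph V}

theorem Aligned.of_forall_exists_eq {m m' : ℕ} {x : Fin m → V} {y : Fin m' → V}
    (hy : Aligned G y) (h : ∀ k, ∃ k', x k = y k') : Aligned G x := by
  obtain ⟨a, b, hab⟩ := hy
  refine ⟨a, b, fun k => ?_⟩
  obtain ⟨k', hk'⟩ := h k
  exact hk' ▸ hab k'

theorem Aligned.comp {m m' : ℕ} {x : Fin m → V} (hx : Aligned G x) (g : Fin m' → Fin m) :
    Aligned G (x ∘ g) :=
  hx.of_forall_exists_eq fun k => ⟨g k, rfl⟩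

theorem aligned_comp_perm_iff {m : ℕ} {x : Fin m → V} (σ : Equiv.Perm (Fin m)) :
    Aligned G (x ∘ σ) ↔ Aligned G x :=
  ⟨fun h => by simpa [Function.comp_assoc] using h.comp σ.symm, fun h => h.comp σ⟩

theorem Aligned.of_cons {m : ℕ} {u : V} {x : Fin m → V} (h : Aligned G (Fin.cons u x)) :
    Aligned G x :=
  h.of_forall_exists_eq fun k => ⟨k.succ, by simp⟩

theorem Aligned.cons_comp {m m' : ℕ} {u : V} {x : Fin m → V} (h : Aligned G (Fin.cons u x))
    (g : Fin m' → Fin m) : Aligned G (Fin.cons u (x ∘ g)) :=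
  h.of_forall_exists_eq fun k => Fin.cases ⟨0, rfl⟩ (fun i => ⟨(g i).succ, by simp⟩) k

end Aligned

section Coboundary

variable {G : SimpleGraph V} {W : Type*} [AddCommGroup W]

theorem cobd_add {n : ℕ} (f g : (Fin (n + 1) → V) → W) :
    cobd G n (f + g) = cobd G n f + cobd G n g := by
  funext x
  simp only [cobd, Pi.add_apply, smul_add, Finset.sum_add_distrib]
  split_ifs <;> simp

theorem cobd_sub {n : ℕ} (f g : (Fin (n + 1) → V) → W) :
    cobd G n (f - g) = cobd G n f - cobd G n g := by
  funext x
  simp only [cobd, Pi.sub_apply, smul_sub, Finset.sum_sub_distrib]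
  split_ifs <;> simp

theorem neg_one_pow_succAbove_add_predAbove {n : ℕ} (i : Fin (n + 2)) (j : Fin (n + 1)) :
    (-1 : ℤ) ^ ((i.succAbove j : ℕ) + (j.predAbove i : ℕ)) = -(-1) ^ ((i : ℕ) + j) := by
  have hval : (i.succAbove j : ℕ) + (j.predAbove i : ℕ) + 1 = i + j ∨
      (i.succAbove j : ℕ) + (j.predAbove i : ℕ) = i + j + 1 := by
    rcases lt_or_ge j.castSucc i with h | h
    · rw [Fin.succAbove_of_castSucc_lt _ _ h, Fin.predAbove_of_castSucc_lt _ _ h]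
      have : (j : ℕ) < i := h
      simp only [Fin.val_castSucc, Fin.val_pred]
      omega
    · rw [Fin.succAbove_of_le_castSucc _ _ h, Fin.predAbove_of_le_castSucc _ _ h]
      simp only [Fin.val_succ, Fin.coe_castPred]
      omega
  rcases hval with h | h
  · rw [← h, pow_succ]; ring
  · rw [h, pow_succ]; ring

/-- The faces `(i, j)` and `(i.succAbove j, j.predAbove i)` of a tuple coincide
and carry opposite signs. -/
theorem cobd_cobd {n : ℕ} (h : (Fin (n + 1) → V) → W) : cobd G (n + 1) (cobd G n h) = 0 := by
  funext y
  simp only [cobd, Pi.zero_apply]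
  split_ifs with hy
  · simp only [if_pos (hy.comp _), Finset.smul_sum, smul_smul, ← pow_add,
      ← Finset.sum_product', Finset.univ_product_univ]
    refine Finset.sum_involution (fun a _ => (a.1.succAbove a.2, a.2.predAbove a.1))
      (fun a _ => ?_) (fun a _ _ h => Fin.succAbove_ne _ _ (congrArg Prod.fst h))
      (fun _ _ => Finset.mem_univ _)
      (fun a _ => by simp [Fin.succAbove_succAbove_predAbove, Fin.predAbove_predAbove_succAbove])
    rw [neg_one_pow_succAbove_add_predAbove, Function.comp_assoc, Function.comp_assoc]
    rw [show Fin.succAbove (a.1.succAbove a.2) ∘ Fin.succAbove (a.2.predAbove a.1) =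
        Fin.succAbove a.1 ∘ Fin.succAbove a.2 from
      funext (Fin.succAbove_succAbove_succAbove_predAbove a.1 a.2)]
    rw [neg_smul, add_neg_cancel]
  · rfl

end Coboundary

section Alternating

variable {W : Type*} [AddCommGroup W]

theorem comp_perm_eq_sign_smul_of_swap {m : ℕ} {φ : (Fin (m + 1) → V) → W}
    (h : ∀ (t : Fin m) (x : Fin (m + 1) → V), φ (x ∘ Equiv.swap t.castSucc t.succ) = -φ x)
    (σ : Equiv.Perm (Fin (m + 1))) (x : Fin (m + 1) → V) :
    φ (x ∘ σ) = (Equiv.Perm.sign σ : ℤ) • φ x := by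
  have hσ : σ ∈ Submonoid.closure (Set.range fun t : Fin m => Equiv.swap t.castSucc t.succ) := by
    rw [Equiv.Perm.mclosure_swap_castSucc_succ]
    exact Submonoid.mem_top σ
  induction hσ using Submonoid.closure_induction generalizing x with
  | mem τ hτ =>
    obtain ⟨t, rfl⟩ := hτ
    rw [h, Equiv.Perm.sign_swap Fin.castSucc_lt_succ.ne]
    simp
  | one => simp
  | mul σ₁ σ₂ _ _ ih₁ ih₂ =>
    rw [Equiv.Perm.coe_mul, ← Function.comp_assoc, ih₂, ih₁, smul_smul, map_mul, Units.val_mul,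
      mul_comm]

theorem Fin.swap_comp_succAbove_castSucc {m : ℕ} (t : Fin (m + 1)) :
    Equiv.swap t.castSucc t.succ ∘ Fin.succAbove t.castSucc = Fin.succAbove t.succ := by
  funext k
  apply Fin.ext
  simp only [Function.comp_apply, Equiv.swap_apply_def, Fin.succAbove, Fin.lt_def,
    Fin.ext_iff, Fin.val_castSucc, Fin.val_succ]
  split_ifs <;> simp_all <;> omega

theorem Fin.swap_comp_succAbove_succ {m : ℕ} (t : Fin (m + 1)) :
    Equiv.swap t.castSucc t.succ ∘ Fin.succAbove t.succ = Fin.succAbove t.castSucc := by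
  rw [← Fin.swap_comp_succAbove_castSucc, ← Function.comp_assoc]
  funext k
  simp

variable {G : SimpleGraph V}

theorem cobd_comp_swap {n : ℕ} {h : (Fin (n + 1) → V) → W}
    (hh : ∀ (σ : Equiv.Perm (Fin (n + 1))) (z : Fin (n + 1) → V),
      h (z ∘ σ) = (Equiv.Perm.sign σ : ℤ) • h z)
    (t : Fin (n + 1)) (x : Fin (n + 2) → V) :
    cobd G n h (x ∘ Equiv.swap t.castSucc t.succ) = -cobd G n h x := by
  have hab : t.castSucc ≠ t.succ := Fin.castSucc_lt_succ.ne
  by_cases hx : Aligned G x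
  · rw [cobd, cobd, if_pos ((aligned_comp_perm_iff _).2 hx), if_pos hx,
      ← Equiv.sum_comp (Equiv.swap t.castSucc t.succ), ← Finset.sum_neg_distrib]
    refine Finset.sum_congr rfl fun j _ => ?_
    rw [Function.comp_assoc]
    by_cases hja : j = t.castSucc
    · rw [hja, Equiv.swap_apply_left, Fin.swap_comp_succAbove_succ, Fin.val_succ,
        Fin.val_castSucc, pow_succ]
      simp
    by_cases hjb : j = t.succ
    · rw [hjb, Equiv.swap_apply_right, Fin.swap_comp_succAbove_castSucc, Fin.val_succ,
        Fin.val_castSucc, pow_succ]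
      simp
    obtain ⟨k₁, hk₁⟩ := Fin.exists_succAbove_eq (Ne.symm hja)
    obtain ⟨k₂, hk₂⟩ := Fin.exists_succAbove_eq (Ne.symm hjb)
    have hk : k₁ ≠ k₂ := by rintro rfl; exact hab (hk₁.symm.trans hk₂)
    rw [Equiv.swap_apply_of_ne_of_ne hja hjb, ← hk₁, ← hk₂,
      Fin.succAbove_right_injective.swap_comp, ← Function.comp_assoc, hh,
      Equiv.Perm.sign_swap hk]
    simp
  · rw [cobd, cobd, if_neg (mt (aligned_comp_perm_iff _).1 hx), if_neg hx, neg_zero]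

theorem cobd_comp_perm {n : ℕ} {h : (Fin (n + 1) → V) → W}
    (hh : ∀ (σ : Equiv.Perm (Fin (n + 1))) (z : Fin (n + 1) → V),
      h (z ∘ σ) = (Equiv.Perm.sign σ : ℤ) • h z)
    (σ : Equiv.Perm (Fin (n + 2))) (x : Fin (n + 2) → V) :
    cobd G n h (x ∘ σ) = (Equiv.Perm.sign σ : ℤ) • cobd G n h x :=
  comp_perm_eq_sign_smul_of_swap (cobd_comp_swap hh) σ x

end Alternating

section ConePoint

def IsConePoint (G : SimpleGraph V) (p : V) {m : ℕ} (x : Fin m → V) (u : V) : Prop :=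
  (∀ k, u ∈ Seg G p (x k)) ∧ Aligned G (Fin.cons u x)

open Classical in
/-- When `(p, x)` is not aligned the cone point is unique (`isConePoint_unique`), so the choice
is canonical. -/
noncomputable def conePoint (G : SimpleGraph V) (p : V) {m : ℕ} (x : Fin m → V) : V :=
  if h : ¬Aligned G (Fin.cons p x) ∧ ∃ u, IsConePoint G p x u then h.2.choose else p

variable {G : SimpleGraph V} {p : V}

theorem IsConePoint.comp {m m' : ℕ} {x : Fin m → V} {u : V} (hu : IsConePoint G p x u)
    (g : Fin m' → Fin m) : IsConePoint G p (x ∘ g) u :=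
  ⟨fun k => hu.1 (g k), hu.2.cons_comp g⟩

theorem conePoint_of_aligned_cons {m : ℕ} {x : Fin m → V} (h : Aligned G (Fin.cons p x)) :
    conePoint G p x = p :=
  dif_neg fun h' => h'.1 h

namespace SimpleGraph.IsTree

variable (hT : G.IsTree)
include hT

theorem exists_isConePoint (p : V) {m : ℕ} {x : Fin m → V} (hx : Aligned G x) :
    ∃ u, IsConePoint G p x u := by
  obtain ⟨a, b, hab⟩ := hx
  obtain ⟨u, hu, hgate⟩ := hT.exists_gate p a b
  exact ⟨u, fun k => hgate _ (hab k), a, b, Fin.cases hu hab⟩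

theorem isConePoint_conePoint {m : ℕ} {x : Fin m → V} (hx : Aligned G x) :
    IsConePoint G p x (conePoint G p x) := by
  by_cases hp : Aligned G (Fin.cons p x)
  · rw [conePoint_of_aligned_cons hp]
    exact ⟨fun k => left_mem_seg p (x k), hp⟩
  · have h : ¬Aligned G (Fin.cons p x) ∧ ∃ u, IsConePoint G p x u :=
      ⟨hp, hT.exists_isConePoint p hx⟩
    rw [conePoint, dif_pos h]
    exact h.2.choose_spec

/-- All of `x` lies on the segment from `u` to its farthest coordinate `x i₀`, and `u` lies on
`[p, x i₀]`. -/
theorem aligned_cons_of_isConePoint_of_ne {m : ℕ} {x : Fin (m + 1) → V} {u u' : V}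
    (hu : IsConePoint G p x u) (hu' : IsConePoint G p x u') (hpu : u ∈ Seg G p u')
    (hne : u ≠ u') : Aligned G (Fin.cons p x) := by
  classical
  obtain ⟨c, d, hcd⟩ := hu.2
  obtain ⟨i₀, -, hmax⟩ := Finset.univ.exists_max_image (fun k => G.dist u (x k))
    ⟨0, Finset.mem_univ 0⟩
  have hpos : 0 < G.dist u u' := hT.connected.pos_dist_of_ne hne
  have hfar : ∀ k, x k ∈ Seg G u (x i₀) := by
    intro k
    have hk := hmax k (Finset.mem_univ k)
    have : G.dist (x k) (x i₀) ≤ G.dist (x k) u' + G.dist u' (x i₀) :=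
      hT.connected.dist_triangle
    have : G.dist (x k) u' = G.dist u' (x k) := G.dist_comm
    have : G.dist (x k) u = G.dist u (x k) := G.dist_comm
    have : G.dist (x i₀) (x k) = G.dist (x k) (x i₀) := G.dist_comm
    have h₁ := hu.1 k
    have h₂ := hu'.1 k
    have h₃ := hu.1 i₀
    have h₄ := hu'.1 i₀
    rcases hT.mem_seg_or_mem_seg_or_mem_seg (hcd 0) (hcd k.succ) (hcd i₀.succ) with h | h | h <;>
      simp only [mem_seg_iff, Fin.cons_zero, Fin.cons_succ] at * <;> omega
  refine ⟨p, x i₀, Fin.cases (left_mem_seg p (x i₀)) fun k => ?_⟩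
  have h₁ := hu.1 k
  have h₂ := hu.1 i₀
  have h₃ := hfar k
  simp only [mem_seg_iff, Fin.cons_succ] at *
  omega

theorem isConePoint_unique {m : ℕ} {x : Fin (m + 1) → V} {u u' : V}
    (hx : ¬Aligned G (Fin.cons p x)) (hu : IsConePoint G p x u) (hu' : IsConePoint G p x u') :
    u = u' := by
  by_contra hne
  rcases hT.mem_seg_total (hu.1 0) (hu'.1 0) with h | h
  · exact hx (hT.aligned_cons_of_isConePoint_of_ne hu hu' h hne)
  · exact hx (hT.aligned_cons_of_isConePoint_of_ne hu' hu h (Ne.symm hne))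

theorem conePoint_comp {m m' : ℕ} {x : Fin m → V} (hx : Aligned G x) (g : Fin (m' + 1) → Fin m)
    (hxg : ¬Aligned G (Fin.cons p (x ∘ g))) : conePoint G p (x ∘ g) = conePoint G p x :=
  hT.isConePoint_unique hxg (hT.isConePoint_conePoint (hx.comp g))
    ((hT.isConePoint_conePoint hx).comp g)

theorem conePoint_comp_perm {m : ℕ} {x : Fin (m + 1) → V} (hx : Aligned G x)
    (σ : Equiv.Perm (Fin (m + 1))) : conePoint G p (x ∘ σ) = conePoint G p x := by
  by_cases hp : Aligned G (Fin.cons p x)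
  · rw [conePoint_of_aligned_cons hp, conePoint_of_aligned_cons (hp.cons_comp σ)]
  · refine hT.conePoint_comp hx σ fun hσ => hp ?_
    simpa [Function.comp_assoc] using hσ.cons_comp σ.symm

theorem aligned_cons_cons {m : ℕ} {z : Fin (m + 1) → V} {u : V}
    (hz : Aligned G (Fin.cons p z)) (hu : u ∈ Seg G p (z 0)) :
    Aligned G (Fin.cons p (Fin.cons u z)) := by
  obtain ⟨a, b, hab⟩ := hz
  have hua : u ∈ Seg G a b := hT.mem_seg_of_mem_seg_of_mem_seg (hab 0) (hab (Fin.succ 0)) hu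
  exact ⟨a, b, Fin.cases (hab 0) (Fin.cases hua fun k => hab k.succ)⟩

end SimpleGraph.IsTree

end ConePoint

section Cone

variable {W : Type*} [AddCommGroup W]

open Classical in
noncomputable def cone (G : SimpleGraph V) (p : V) {n : ℕ} (f : (Fin (n + 2) → V) → W) :
    (Fin (n + 1) → V) → W :=
  fun x => if Aligned G x then f (Fin.cons (conePoint G p x) x) else 0

variable {G : SimpleGraph V} {p : V}

theorem eq_sum_cons_of_cobd_eq_zero {n : ℕ} {f : (Fin (n + 2) → V) → W}
    (hf : cobd G (n + 1) f = 0) {u : V} {y : Fin (n + 2) → V} (hy : Aligned G (Fin.cons u y)) :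
    f y = ∑ j : Fin (n + 2), ((-1 : ℤ) ^ (j : ℕ)) • f (Fin.cons u (y ∘ Fin.succAbove j)) := by
  have h := congrFun hf (Fin.cons u y)
  rw [cobd, if_pos hy, Pi.zero_apply, Fin.sum_univ_succ] at h
  have hface : ∀ j : Fin (n + 2), (Fin.cons u y : Fin (n + 3) → V) ∘ Fin.succAbove j.succ =
      Fin.cons u (y ∘ Fin.succAbove j) := by
    intro j
    funext k
    cases k using Fin.cases <;> simp [Fin.succ_succAbove_succ]
  simp only [Fin.val_zero, pow_zero, one_smul, Fin.val_succ, pow_succ, mul_neg_one, neg_smul,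
    Finset.sum_neg_distrib, hface] at h
  exact sub_eq_zero.1 (by simpa [sub_eq_add_neg] using h)

theorem cobd_cone_apply_of_aligned_cons {n : ℕ} {f : (Fin (n + 2) → V) → W}
    (hf : cobd G (n + 1) f = 0) {z : Fin (n + 2) → V} (hz : Aligned G (Fin.cons p z)) :
    cobd G n (cone G p f) z = f z := by
  rw [cobd, if_pos hz.of_cons, eq_sum_cons_of_cobd_eq_zero hf hz]
  refine Finset.sum_congr rfl fun j _ => ?_
  rw [cone, if_pos (hz.of_cons.comp _), conePoint_of_aligned_cons (hz.cons_comp _)]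

theorem SimpleGraph.IsTree.cobd_cone_eq_self (hT : G.IsTree) {n : ℕ}
    {f : (Fin (n + 2) → V) → W} (hf : cobd G (n + 1) f = 0)
    (hf₀ : ∀ y, ¬Aligned G y → f y = 0) (hfp : ∀ y, Aligned G (Fin.cons p y) → f y = 0) :
    cobd G n (cone G p f) = f := by
  funext y
  by_cases hy : Aligned G y
  · have hq := hT.isConePoint_conePoint (p := p) hy
    rw [cobd, if_pos hy, eq_sum_cons_of_cobd_eq_zero hf hq.2]
    refine Finset.sum_congr rfl fun j _ => ?_
    rw [cone, if_pos (hy.comp _)]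
    by_cases hpj : Aligned G (Fin.cons p (y ∘ Fin.succAbove j))
    · rw [conePoint_of_aligned_cons hpj, hfp _ (hT.aligned_cons_cons hpj (left_mem_seg _ _)),
        hfp _ (hT.aligned_cons_cons hpj (hq.1 _))]
    · rw [hT.conePoint_comp hy _ hpj]
  · rw [cobd, if_neg hy, hf₀ y hy]

theorem SimpleGraph.IsTree.cone_comp_perm (hT : G.IsTree) {n : ℕ} {f : (Fin (n + 2) → V) → W}
    (hf : ∀ (σ : Equiv.Perm (Fin (n + 2))) (x : Fin (n + 2) → V),
      f (x ∘ σ) = (Equiv.Perm.sign σ : ℤ) • f x)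
    (σ : Equiv.Perm (Fin (n + 1))) (x : Fin (n + 1) → V) :
    cone G p f (x ∘ σ) = (Equiv.Perm.sign σ : ℤ) • cone G p f x := by
  by_cases hx : Aligned G x
  · set τ : Equiv.Perm (Fin (n + 2)) := Equiv.Perm.decomposeFin.symm (0, σ)
    have hτ : Fin.cons (conePoint G p x) (x ∘ σ) = Fin.cons (conePoint G p x) x ∘ τ := by
      funext k
      cases k using Fin.cases <;> simp [τ]
    have hsign : Equiv.Perm.sign τ = Equiv.Perm.sign σ := by
      simp [τ, Equiv.Perm.decomposeFin.symm_sign]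
    rw [cone, cone, if_pos ((aligned_comp_perm_iff σ).2 hx), if_pos hx,
      hT.conePoint_comp_perm hx, hτ, hf, hsign]
  · rw [cone, cone, if_neg (mt (aligned_comp_perm_iff σ).1 hx), if_neg hx, smul_zero]

end Cone

section Bounded

variable {G : SimpleGraph V} {W : Type*} [SeminormedAddCommGroup W]

theorem norm_cobd_le {n : ℕ} {f : (Fin (n + 1) → V) → W} {C : ℝ} (hC : 0 ≤ C)
    (hf : ∀ x, ‖f x‖ ≤ C) (y : Fin (n + 2) → V) : ‖cobd G n f y‖ ≤ (n + 2) * C := by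
  rw [cobd]
  split_ifs
  · calc ‖∑ j : Fin (n + 2), ((-1 : ℤ) ^ (j : ℕ)) • f (y ∘ Fin.succAbove j)‖
        ≤ ∑ j : Fin (n + 2), ‖((-1 : ℤ) ^ (j : ℕ)) • f (y ∘ Fin.succAbove j)‖ := norm_sum_le _ _
      _ ≤ ∑ _j : Fin (n + 2), C := Finset.sum_le_sum fun j _ => by
          rcases neg_one_pow_eq_or ℤ (j : ℕ) with h | h <;> simp [h, hf]
      _ = (n + 2) * C := by simp
  · rw [norm_zero]
    positivity

theorem IsAlFun.add {n : ℕ} {f g : (Fin (n + 1) → V) → W} (hf : IsAlFun G n f)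
    (hg : IsAlFun G n g) : IsAlFun G n (f + g) := by
  obtain ⟨⟨C, hC⟩, hfσ, hf₀⟩ := hf
  obtain ⟨⟨D, hD⟩, hgσ, hg₀⟩ := hg
  refine ⟨⟨C + D, fun x => (norm_add_le _ _).trans (add_le_add (hC x) (hD x))⟩,
    fun σ x => ?_, fun x hx => ?_⟩
  · simp [hfσ, hgσ, smul_add]
  · simp [hf₀ x hx, hg₀ x hx]

theorem IsAlFun.sub {n : ℕ} {f g : (Fin (n + 1) → V) → W} (hf : IsAlFun G n f)
    (hg : IsAlFun G n g) : IsAlFun G n (f - g) := by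
  obtain ⟨⟨C, hC⟩, hfσ, hf₀⟩ := hf
  obtain ⟨⟨D, hD⟩, hgσ, hg₀⟩ := hg
  refine ⟨⟨C + D, fun x => (norm_sub_le _ _).trans (add_le_add (hC x) (hD x))⟩,
    fun σ x => ?_, fun x hx => ?_⟩
  · simp [hfσ, hgσ, smul_sub]
  · simp [hf₀ x hx, hg₀ x hx]

theorem IsAlFun.cobd {n : ℕ} {f : (Fin (n + 1) → V) → W} (hf : IsAlFun G n f) :
    IsAlFun G (n + 1) (cobd G n f) := by
  obtain ⟨⟨C, hC⟩, hfσ, -⟩ := hf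
  have hC' : ∀ x, ‖f x‖ ≤ max C 0 := fun x => (hC x).trans (le_max_left _ _)
  exact ⟨⟨_, norm_cobd_le (le_max_right _ _) hC'⟩, cobd_comp_perm hfσ,
    fun x hx => if_neg hx⟩

theorem SimpleGraph.IsTree.isAlFun_cone (hT : G.IsTree) (p : V) {n : ℕ}
    {f : (Fin (n + 2) → V) → W} (hf : IsAlFun G (n + 1) f) : IsAlFun G n (cone G p f) := by
  obtain ⟨⟨C, hC⟩, hfσ, -⟩ := hf
  refine ⟨⟨max C 0, fun x => ?_⟩, hT.cone_comp_perm hfσ, fun x hx => if_neg hx⟩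
  rw [cone]
  split_ifs
  · exact (hC _).trans (le_max_left _ _)
  · simp

end Bounded

section Exactness

variable {G : SimpleGraph V} {W : Type*} [SeminormedAddCommGroup W]

theorem cobd_const (v : W) : cobd G 0 (Function.const (Fin 1 → V) v) = 0 := by
  funext x
  simp [cobd, Fin.sum_univ_two]

theorem eq_const_of_cobd_eq_zero [Nonempty V] {f : (Fin 1 → V) → W} (hf : cobd G 0 f = 0) :
    ∃ v : W, f = Function.const (Fin 1 → V) v := by
  have hpair : ∀ z w : V, f (fun _ => z) = f (fun _ => w) := by
    intro z w
    have h := congrFun hf ![w, z]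
    have hwz : Aligned G ![w, z] :=
      ⟨w, z, Fin.cases (left_mem_seg w z) fun k => by simpa using right_mem_seg w z⟩
    have h₀ : ![w, z] ∘ Fin.succAbove 0 = fun _ : Fin 1 => z := by funext k; fin_cases k; rfl
    have h₁ : ![w, z] ∘ Fin.succAbove 1 = fun _ : Fin 1 => w := by funext k; fin_cases k; rfl
    rw [cobd, if_pos hwz, Fin.sum_univ_two, h₀, h₁] at h
    simpa [add_neg_eq_zero] using h
  obtain ⟨p⟩ := ‹Nonempty V›
  refine ⟨f (fun _ => p), funext fun x => ?_⟩
  rw [show x = fun _ => x 0 from funext fun k => congrArg x (Subsingleton.elim k 0)]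
  exact hpair _ _

theorem SimpleGraph.IsTree.exists_cobd_eq (hT : G.IsTree) (p : V) {n : ℕ}
    {f : (Fin (n + 2) → V) → W} (hf : IsAlFun G (n + 1) f) (hdf : cobd G (n + 1) f = 0) :
    ∃ g : (Fin (n + 1) → V) → W, IsAlFun G n g ∧ cobd G n g = f := by
  set f₁ := f - cobd G n (cone G p f)
  have hf₁ : IsAlFun G (n + 1) f₁ := hf.sub (hT.isAlFun_cone p hf).cobd
  have hdf₁ : cobd G (n + 1) f₁ = 0 := by rw [cobd_sub, hdf, cobd_cobd, sub_zero]
  have hf₁p : ∀ y, Aligned G (Fin.cons p y) → f₁ y = 0 := fun y hy =>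
    sub_eq_zero.2 (cobd_cone_apply_of_aligned_cons hdf hy).symm
  refine ⟨cone G p f + cone G p f₁, (hT.isAlFun_cone p hf).add (hT.isAlFun_cone p hf₁), ?_⟩
  rw [cobd_add, hT.cobd_cone_eq_self hdf₁ hf₁.2.2 hf₁p]
  exact add_sub_cancel _ _

end Exactness

theorem statement13_general (G : SimpleGraph V) (hT : G.IsTree)
    {W : Type*} [NormedAddCommGroup W] :
    (Function.Injective fun v : W => (Function.const (Fin 1 → V) v)) ∧
    (∀ v : W, cobd G 0 (Function.const (Fin 1 → V) v) = 0) ∧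
    (∀ (n : ℕ) (g : (Fin (n + 1) → V) → W), IsAlFun G n g →
      cobd G (n + 1) (cobd G n g) = 0) ∧
    (∀ f : (Fin 1 → V) → W, IsAlFun G 0 f → cobd G 0 f = 0 →
      ∃ v : W, f = Function.const (Fin 1 → V) v) ∧
    (∀ (n : ℕ) (f : (Fin (n + 2) → V) → W), IsAlFun G (n + 1) f → cobd G (n + 1) f = 0 →
      ∃ g : (Fin (n + 1) → V) → W, IsAlFun G n g ∧ cobd G n g = f) := by
  obtain ⟨p⟩ := hT.connected.nonempty
  have : Nonempty V := ⟨p⟩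
  exact ⟨Function.const_injective, cobd_const, fun n g _ => cobd_cobd g,
    fun f _ hdf => eq_const_of_cobd_eq_zero hdf, fun n f hf hdf => hT.exists_cobd_eq p hf hdf⟩

/-- Let `T` be a non-empty simplicial tree and `W` a real Banach
space. The augmented cochain complex
`0 → W → ℓ∞_align(T,W) → ℓ∞_align(T²,W) → ℓ∞_align(T³,W) → ⋯` is exact: the map
`W → ℓ∞_align(T,W)` sending `v` to the constant function `v` is injective, its image is
the kernel of the first coboundary, and the kernel of each higher coboundary is the
image of the previous one. -/
theorem statement13 (G : SimpleGraph V) [Nonempty V] (hT : G.IsTree)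
    {W : Type*} [NormedAddCommGroup W] [NormedSpace ℝ W] [CompleteSpace W] :
    (Function.Injective fun v : W => (Function.const (Fin 1 → V) v)) ∧
    (∀ v : W, cobd G 0 (Function.const (Fin 1 → V) v) = 0) ∧
    (∀ (n : ℕ) (g : (Fin (n + 1) → V) → W), IsAlFun G n g →
      cobd G (n + 1) (cobd G n g) = 0) ∧
    (∀ f : (Fin 1 → V) → W, IsAlFun G 0 f → cobd G 0 f = 0 →
      ∃ v : W, f = Function.const (Fin 1 → V) v) ∧
    (∀ (n : ℕ) (f : (Fin (n + 2) → V) → W), IsAlFun G (n + 1) f → cobd G (n + 1) f = 0 →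
      ∃ g : (Fin (n + 1) → V) → W, IsAlFun G n g ∧ cobd G n g = f) :=
  statement13_general G hT
end

section
/- Let T be a tree, let G be a group of automorphisms of T acting without inversions and strongly transitively, let L be a geodesic line in T and let H ≤ G be the setwise stabilizer of L. Let x = (x₀,…,x_n) be a tuple of vertices of T all of whose coordinates lie on the segment [x₀,x_n], with x₀ ≠ x_n. If g, g′ ∈ G are such that all coordinates of g·x and all coordinates of g′·x lie on L, then there exists h ∈ H with h(g·x_k) = g′·x_k for all 0 ≤ k ≤ n. -/
/-!
Common definitions: trees are modelled as simple graphs `G` on a vertex type `V`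
satisfying `G.IsTree`; `Seg G a b` is the geodesic segment `[a,b]` (the set of
vertices lying on the geodesic from `a` to `b`); `Aligned` tuples are those
contained in some geodesic segment; `AltChain V R n` is the module `C_n(T,R)` of
alternating `n`-chains; `chainOf x` is the class of a tuple; `alignedSub G R n`
is `A_n(T,R)`; `cnorm` is the ℓ¹-quotient norm.
-/

open Finsupp

variable {V : Type*}

/-- A geodesic line in `T`: an isometrically embedded copy of `ℤ`. -/
def IsLine (G : SimpleGraph V) (ℓ : ℤ → V) : Prop :=
  ∀ m n : ℤ, G.dist (ℓ m) (ℓ n) = (m - n).natAbs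

/-- The action of `Γ` on `T` is strongly transitive: it is transitive on the pairs
consisting of a geodesic line and a geometric (unoriented) edge contained in it. -/
def StronglyTransitive (G : SimpleGraph V) (Γ : Type*) [SMul Γ V] : Prop :=
  ∀ ℓ₁ ℓ₂ : ℤ → V, IsLine G ℓ₁ → IsLine G ℓ₂ → ∀ m₁ m₂ : ℤ,
    ∃ γ : Γ, ((γ • ·) '' Set.range ℓ₁ = Set.range ℓ₂) ∧
      ({γ • ℓ₁ m₁, γ • ℓ₁ (m₁ + 1)} : Set V) = {ℓ₂ m₂, ℓ₂ (m₂ + 1)}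

/-- The action of `Γ` on `T` is without inversions: no element exchanges two adjacent
vertices. -/
def NoInversions (G : SimpleGraph V) (Γ : Type*) [SMul Γ V] : Prop :=
  ∀ (γ : Γ) (u v : V), G.Adj u v → ¬(γ • u = v ∧ γ • v = u)

/-!
Put `f = g' g⁻¹`, so that `f (g xₖ) = g' xₖ`. Let `u = g x₀` and let `u'` be the neighbour of `u`
on `ℓ` towards `g xₙ`. In a tree the segment between two vertices of `ℓ` lies on `ℓ`, hence
`f u' ∈ ℓ`. Strong transitivity gives `h` stabilising `ℓ` and mapping the edge `{u, u'}` onto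
`{f u, f u'}`; it cannot reverse it, since then `f⁻¹ h` would be an inversion. So `h` agrees with
`f` on `u` and `u'`, and since a vertex of `ℓ` is determined by its distances to two adjacent
vertices of `ℓ`, `h` and `f` agree on every `g xₖ`.
-/

open Set

namespace SimpleGraph

variable {V' : Type*} {G : SimpleGraph V} {G' : SimpleGraph V'}

lemma Hom.dist_map_le (φ : G →g G') {u v : V} (h : G.Reachable u v) :
    G'.dist (φ u) (φ v) ≤ G.dist u v := by
  obtain ⟨p, hp⟩ := h.exists_walk_length_eq_dist
  exact (dist_le (p.map φ)).trans_eq (by rw [Walk.length_map, hp])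

lemma Iso.dist_map (φ : G ≃g G') (u v : V) : G'.dist (φ u) (φ v) = G.dist u v := by
  by_cases h : G.Reachable u v
  · refine le_antisymm (φ.toHom.dist_map_le h) ?_
    simpa using φ.symm.toHom.dist_map_le (u := φ u) (v := φ v) (Iso.reachable_iff.mpr h)
  · rw [dist_eq_zero_of_not_reachable h,
      dist_eq_zero_of_not_reachable (Iso.reachable_iff.not.mpr h)]

lemma IsTree.eq_of_mem_seg (hT : G.IsTree) {u w y z : V} (hy : y ∈ Seg G u w)
    (hz : z ∈ Seg G u w) (h : G.dist u y = G.dist u z) : y = z := by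
  have hconn := hT.connected
  obtain ⟨p₁, hp₁⟩ := hconn.exists_walk_length_eq_dist u y
  obtain ⟨p₂, hp₂⟩ := hconn.exists_walk_length_eq_dist y w
  obtain ⟨q₁, hq₁⟩ := hconn.exists_walk_length_eq_dist u z
  obtain ⟨q₂, hq₂⟩ := hconn.exists_walk_length_eq_dist z w
  have hp : (p₁.append p₂).IsPath :=
    Walk.isPath_of_length_eq_dist _ (by rw [Walk.length_append]; exact hp₁ ▸ hp₂ ▸ hy)
  have hq : (q₁.append q₂).IsPath :=
    Walk.isPath_of_length_eq_dist _ (by rw [Walk.length_append]; exact hq₁ ▸ hq₂ ▸ hz)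
  have heq : p₁.append p₂ = q₁.append q₂ := (hT.existsUnique_path u w).unique hp hq
  calc y = (p₁.append p₂).getVert (G.dist u y) := by
        rw [← hp₁, Walk.getVert_append]; simp
    _ = z := by rw [heq, h, ← hq₁, Walk.getVert_append]; simp

end SimpleGraph

open SimpleGraph

variable {G : SimpleGraph V}

lemma dist_smul_of_adj_iff {Γ : Type*} [Group Γ] [MulAction Γ V]
    (hauto : ∀ (γ : Γ) (u v : V), G.Adj u v ↔ G.Adj (γ • u) (γ • v)) (γ : Γ) (u v : V) :
    G.dist (γ • u) (γ • v) = G.dist u v :=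
  Iso.dist_map ⟨MulAction.toPerm γ, (hauto γ _ _).symm⟩ u v

lemma smul_mem_seg_of_adj_iff {Γ : Type*} [Group Γ] [MulAction Γ V]
    (hauto : ∀ (γ : Γ) (u v : V), G.Adj u v ↔ G.Adj (γ • u) (γ • v)) (γ : Γ) {a b v : V}
    (hv : v ∈ Seg G a b) : γ • v ∈ Seg G (γ • a) (γ • b) := by
  simpa only [Seg, mem_ofPred_eq, dist_smul_of_adj_iff hauto] using hv

namespace IsLine

variable {ℓ : ℤ → V}

lemma adj_iff (hℓ : IsLine G ℓ) (m m' : ℤ) : G.Adj (ℓ m) (ℓ m') ↔ (m - m').natAbs = 1 := by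
  rw [← dist_eq_one_iff_adj, hℓ]

lemma mem_seg_iff (hℓ : IsLine G ℓ) (p q m : ℤ) :
    ℓ m ∈ Seg G (ℓ p) (ℓ q) ↔ (p - m).natAbs + (m - q).natAbs = (p - q).natAbs := by
  rw [Seg, mem_ofPred_eq, hℓ, hℓ, hℓ]

lemma exists_adj_mem_seg (hℓ : IsLine G ℓ) {p q : ℤ} (h : p ≠ q) :
    ∃ m, G.Adj (ℓ p) (ℓ m) ∧ ℓ m ∈ Seg G (ℓ p) (ℓ q) := by
  rcases lt_or_gt_of_ne h with hpq | hpq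
  · exact ⟨p + 1, (hℓ.adj_iff _ _).mpr (by omega), (hℓ.mem_seg_iff _ _ _).mpr (by omega)⟩
  · exact ⟨p - 1, (hℓ.adj_iff _ _).mpr (by omega), (hℓ.mem_seg_iff _ _ _).mpr (by omega)⟩

lemma exists_pair_eq (hℓ : IsLine G ℓ) {u u' : V} (hu : u ∈ range ℓ) (hu' : u' ∈ range ℓ)
    (hadj : G.Adj u u') : ∃ m, ({u, u'} : Set V) = {ℓ m, ℓ (m + 1)} := by
  obtain ⟨p, rfl⟩ := hu
  obtain ⟨p', rfl⟩ := hu'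
  rw [hℓ.adj_iff] at hadj
  rcases (show p' = p + 1 ∨ p = p' + 1 by omega) with rfl | rfl
  · exact ⟨p, rfl⟩
  · exact ⟨p', pair_comm _ _⟩

lemma eq_of_dist_eq (hℓ : IsLine G ℓ) {y z u u' : V} (hy : y ∈ range ℓ) (hz : z ∈ range ℓ)
    (hu : u ∈ range ℓ) (hu' : u' ∈ range ℓ) (hadj : G.Adj u u')
    (h : G.dist y u = G.dist z u) (h' : G.dist y u' = G.dist z u') : y = z := by
  obtain ⟨j, rfl⟩ := hy
  obtain ⟨j', rfl⟩ := hz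
  obtain ⟨m, rfl⟩ := hu
  obtain ⟨m', rfl⟩ := hu'
  rw [hℓ.adj_iff] at hadj
  rw [hℓ, hℓ] at h h'
  congr 1
  omega

lemma seg_subset_range (hℓ : IsLine G ℓ) (hT : G.IsTree) (p q : ℤ) :
    Seg G (ℓ p) (ℓ q) ⊆ range ℓ := by
  intro y hy
  have hle : G.dist (ℓ p) y ≤ (p - q).natAbs := by
    rw [← hℓ]; exact hy ▸ Nat.le_add_right _ _
  obtain ⟨m, hpm, hmq⟩ : ∃ m : ℤ, (p - m).natAbs = G.dist (ℓ p) y ∧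
      (p - m).natAbs + (m - q).natAbs = (p - q).natAbs := by
    rcases le_total p q with hpq | hpq
    · exact ⟨p + G.dist (ℓ p) y, by omega, by omega⟩
    · exact ⟨p - G.dist (ℓ p) y, by omega, by omega⟩
  exact ⟨m, hT.eq_of_mem_seg ((hℓ.mem_seg_iff _ _ _).mpr hmq) hy (by rw [hℓ, hpm])⟩

end IsLine

lemma mem_iff_smul_mem_of_image_eq {Γ : Type*} [Group Γ] [MulAction Γ V] {γ : Γ} {s : Set V}
    (h : (γ • ·) '' s = s) (v : V) : v ∈ s ↔ γ • v ∈ s := by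
  conv_rhs => rw [← h, image_smul, smul_mem_smul_set_iff]

lemma StronglyTransitive.exists_image_pair_eq {Γ : Type*} [SMul Γ V] {ℓ : ℤ → V}
    (htrans : StronglyTransitive G Γ) (hℓ : IsLine G ℓ) {u u' w w' : V}
    (hu : u ∈ range ℓ) (hu' : u' ∈ range ℓ) (huu' : G.Adj u u')
    (hw : w ∈ range ℓ) (hw' : w' ∈ range ℓ) (hww' : G.Adj w w') :
    ∃ γ : Γ, (γ • ·) '' range ℓ = range ℓ ∧ ({γ • u, γ • u'} : Set V) = {w, w'} := by
  obtain ⟨m, hm⟩ := hℓ.exists_pair_eq hu hu' huu'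
  obtain ⟨m', hm'⟩ := hℓ.exists_pair_eq hw hw' hww'
  obtain ⟨γ, hγℓ, hγ⟩ := htrans ℓ ℓ hℓ hℓ m m'
  refine ⟨γ, hγℓ, ?_⟩
  rw [← image_pair, hm, image_pair, hγ, hm']

lemma exists_stabilizer_eq_on_adj {Γ : Type*} [Group Γ] [MulAction Γ V] {ℓ : ℤ → V}
    (hauto : ∀ (γ : Γ) (u v : V), G.Adj u v ↔ G.Adj (γ • u) (γ • v))
    (hninv : NoInversions G Γ) (htrans : StronglyTransitive G Γ) (hℓ : IsLine G ℓ) (f : Γ)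
    {u u' : V} (hu : u ∈ range ℓ) (hu' : u' ∈ range ℓ) (hadj : G.Adj u u')
    (hfu : f • u ∈ range ℓ) (hfu' : f • u' ∈ range ℓ) :
    ∃ h : Γ, (∀ v, v ∈ range ℓ ↔ h • v ∈ range ℓ) ∧ h • u = f • u ∧ h • u' = f • u' := by
  obtain ⟨h, hℓh, hpair⟩ := htrans.exists_image_pair_eq hℓ hu hu' hadj hfu hfu'
    ((hauto f _ _).mp hadj)
  refine ⟨h, mem_iff_smul_mem_of_image_eq hℓh, ?_⟩
  rcases pair_eq_pair_iff.mp hpair with hsame | ⟨hu_swap, hu'_swap⟩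
  · exact hsame
  · refine (hninv (f⁻¹ * h) u u' hadj ⟨?_, ?_⟩).elim
    · rw [mul_smul, hu_swap, inv_smul_smul]
    · rw [mul_smul, hu'_swap, inv_smul_smul]

theorem statement15_general (G : SimpleGraph V) (hT : G.IsTree)
    (Γ : Type*) [Group Γ] [MulAction Γ V]
    (hauto : ∀ (γ : Γ) (u v : V), G.Adj u v ↔ G.Adj (γ • u) (γ • v))
    (hninv : NoInversions G Γ) (htrans : StronglyTransitive G Γ)
    (ℓ : ℤ → V) (hℓ : IsLine G ℓ)
    (n : ℕ) (x : Fin (n + 1) → V)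
    (hne : x 0 ≠ x (Fin.last n))
    (g g' : Γ)
    (hg : ∀ k, g • x k ∈ Set.range ℓ) (hg' : ∀ k, g' • x k ∈ Set.range ℓ) :
    ∃ h : Γ, (∀ v : V, v ∈ Set.range ℓ ↔ h • v ∈ Set.range ℓ) ∧
      ∀ k, h • g • x k = g' • x k := by
  set f := g' * g⁻¹
  have hf : ∀ k, f • g • x k = g' • x k := fun k => by simp [f, mul_smul]
  obtain ⟨p, hp⟩ := hg 0
  obtain ⟨q, hq⟩ := hg (Fin.last n)
  obtain ⟨m, hadj, hseg⟩ := hℓ.exists_adj_mem_seg (p := p) (q := q) <| by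
    rintro rfl
    exact hne (smul_left_cancel g (hp.symm.trans hq))
  have hfm : f • ℓ m ∈ range ℓ := by
    obtain ⟨p', hp'⟩ := hg' 0
    obtain ⟨q', hq'⟩ := hg' (Fin.last n)
    refine hℓ.seg_subset_range hT p' q' ?_
    rw [hp', hq', ← hf, ← hf, ← hp, ← hq]
    exact smul_mem_seg_of_adj_iff hauto f hseg
  obtain ⟨h, hstab, hp_eq, hm_eq⟩ := exists_stabilizer_eq_on_adj hauto hninv htrans hℓ f
    ⟨p, rfl⟩ ⟨m, rfl⟩ hadj (by rw [hp, hf]; exact hg' 0) hfm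
  refine ⟨h, hstab, fun k => ?_⟩
  rw [← hf]
  refine hℓ.eq_of_dist_eq ((hstab _).mp (hg k)) (hf k ▸ hg' k) ((hstab _).mp ⟨p, rfl⟩)
    ((hstab _).mp ⟨m, rfl⟩) ((hauto h _ _).mp hadj) ?_ ?_
  · rw [dist_smul_of_adj_iff hauto, hp_eq, dist_smul_of_adj_iff hauto]
  · rw [dist_smul_of_adj_iff hauto, hm_eq, dist_smul_of_adj_iff hauto]

/-- Let `T` be a tree, `Γ` a group of automorphisms of `T` acting
without inversions and strongly transitively, `ℓ` a geodesic line in `T` and `H ≤ Γ`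
the setwise stabiliser of the line. Let `x = (x₀,…,xₙ)` be a tuple of vertices all of
whose coordinates lie on the segment `[x₀,xₙ]`, with `x₀ ≠ xₙ`. If `g, g′ ∈ Γ` are such
that all coordinates of `g·x` and of `g′·x` lie on the line, then there is `h ∈ H` with
`h (g xₖ) = g′ xₖ` for all `k`. -/
theorem statement15 (G : SimpleGraph V) (hT : G.IsTree)
    (Γ : Type*) [Group Γ] [MulAction Γ V] [FaithfulSMul Γ V]
    (hauto : ∀ (γ : Γ) (u v : V), G.Adj u v ↔ G.Adj (γ • u) (γ • v))
    (hninv : NoInversions G Γ) (htrans : StronglyTransitive G Γ)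
    (ℓ : ℤ → V) (hℓ : IsLine G ℓ)
    (n : ℕ) (x : Fin (n + 1) → V)
    (hx : ∀ k, x k ∈ Seg G (x 0) (x (Fin.last n)))
    (hne : x 0 ≠ x (Fin.last n))
    (g g' : Γ)
    (hg : ∀ k, g • x k ∈ Set.range ℓ) (hg' : ∀ k, g' • x k ∈ Set.range ℓ) :
    ∃ h : Γ, (∀ v : V, v ∈ Set.range ℓ ↔ h • v ∈ Set.range ℓ) ∧
      ∀ k, h • g • x k = g' • x k :=
  statement15_general G hT Γ hauto hninv htrans ℓ hℓ n x hne g g' hg hg'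
end
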